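/- For any differentiable loss ℓ: ℝ^{m_y×n̄} → ℝ, along any gradient flow trajectory of L(W,B) = ℓ(f(X,W,B)_{*I}) for an H-layer (non-multiscale) linear GNN, for all t ≥ 0: d/dt L(W_t,B_t) = −‖vec[V_t (X(S^H)_{*I})ᵀ]‖²_{F_{(H),t}} − Σ_{i=1}^H ‖J_{(i,H),t} vec[V_t (X(S^H)_{*I})ᵀ]‖₂², where V_t is the derivative of ℓ at the network output f(X,W_t,B_t)_{*I}. -/

import Mathlib

open Matrix
open scoped Kronecker

noncomputable section

/-- Squared Frobenius norm of a real matrix. -/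
def frobSq {α β : Type*} [Fintype α] [Fintype β] (M : Matrix α β ℝ) : ℝ :=
  ∑ i, ∑ j, (M i j) ^ 2

/-- Squared Euclidean norm of a vector. -/
def vecNormSq {α : Type*} [Fintype α] (v : α → ℝ) : ℝ := ∑ i, (v i) ^ 2

/-- Quadratic form `vᵀ M v` (Mahalanobis-type square "norm" `‖v‖_M²`). -/
def quadForm {α : Type*} [Fintype α] (M : Matrix α α ℝ) (v : α → ℝ) : ℝ :=
  v ⬝ᵥ M.mulVec v

/-- Column-stacking vectorization of a matrix: `vecM M (j, i) = M i j`. -/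
def vecM {α β : Type*} (M : Matrix α β ℝ) : β × α → ℝ := fun p => M p.2 p.1

/-- Smallest (real) eigenvalue of a square matrix, as infimum of its eigenvalue set. -/
def lambdaMin {α : Type*} [Fintype α] (A : Matrix α α ℝ) : ℝ :=
  sInf {r : ℝ | ∃ v : α → ℝ, v ≠ 0 ∧ A.mulVec v = r • v}

/-- The `min(#rows, #cols)`-th largest singular value of a matrix. -/
def sigmaMin {α β : Type*} [Fintype α] [Fintype β] (M : Matrix α β ℝ) : ℝ :=
  if Fintype.card α ≤ Fintype.card β then Real.sqrt (lambdaMin (M * Mᵀ))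
  else Real.sqrt (lambdaMin (Mᵀ * M))

/-- Entrywise partial-derivative matrix (gradient) of a scalar function of a matrix. -/
def entryDeriv {a b : ℕ} (L : Matrix (Fin a) (Fin b) ℝ → ℝ)
    (M : Matrix (Fin a) (Fin b) ℝ) : Matrix (Fin a) (Fin b) ℝ :=
  Matrix.of fun i j => deriv (fun s : ℝ => L (M + s • Matrix.single i j 1)) 0

/-- `Bseg B a b = B (b-1) * ⋯ * B a` (in the paper's 1-based notation, with
`B l` here being the paper's `B_{(l+1)} : ℝ^{m_{l+1} × m_l}`, this is `B̄^{(a+1:b)}`,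
the product of the layers `a+1, …, b`); `Bseg B a a = 1` and in particular
`Bseg B 0 l` is the paper's `B̄^{(1:l)}`. -/
def Bseg {m : ℕ → ℕ} (B : ∀ l : ℕ, Matrix (Fin (m (l + 1))) (Fin (m l)) ℝ) (a : ℕ) :
    (b : ℕ) → Matrix (Fin (m b)) (Fin (m a)) ℝ
  | 0 => if h : a = 0 then by rw [h]; exact 1 else 0
  | b + 1 => if h : a = b + 1 then by rw [h]; exact 1 else B b * Bseg B a b


attribute [local instance] Matrix.frobeniusNormedAddCommGroup Matrix.frobeniusNormedSpace

/-- Output (restricted to training columns) of the `H`-layer linear GNN. -/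
def gnnOut {n nb my : ℕ} {m : ℕ → ℕ} (H : ℕ)
    (X : Matrix (Fin (m 0)) (Fin n) ℝ) (S : Matrix (Fin n) (Fin n) ℝ)
    (ι : Fin nb → Fin n)
    (W : Matrix (Fin my) (Fin (m H)) ℝ)
    (B : ∀ l : ℕ, Matrix (Fin (m (l + 1))) (Fin (m l)) ℝ) : Matrix (Fin my) (Fin nb) ℝ :=
  W * Bseg B 0 H * X * (S ^ H).submatrix id ι


/-! Write `F = W * B̄ * K` with `B̄ = Bseg B 0 H` and `K = X (S^H)_{*I}`, and `V` for the derivative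
of `ℓ` at `F`. By the chain rule `d/dt ℓ(F_t) = ⟨V, Ḟ⟩` (Frobenius pairing), and since `F` is
linear in each parameter separately,
`Ḟ = Ẇ B̄ K + Σ_{l<H} W (Bseg B (l+1) H) Ḃ_l (Bseg B 0 l) K`.
A parameter `M` entering as `C * M * E` has gradient `Cᵀ V Eᵀ`, so along the flow its term
contributes `⟨V, C (-Cᵀ V Eᵀ) E⟩ = -‖Cᵀ V Eᵀ‖²`. The identity `(B ⊗ A) vec Y = vec (A Y Bᵀ)`
turns these squared norms into the quadratic forms of the statement. -/

section MatrixCalculus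

variable {𝕜 : Type*} [NontriviallyNormedField 𝕜] [CompleteSpace 𝕜] {l m n : Type*}
  [Fintype l] [Fintype m] [Fintype n] {s : Set 𝕜} {t : 𝕜}

theorem hasDerivWithinAt_matrix {F : 𝕜 → Matrix m n 𝕜} {F' : Matrix m n 𝕜} :
    HasDerivWithinAt F F' s t ↔ ∀ i j, HasDerivWithinAt (fun u => F u i j) (F' i j) s t := by
  let e : Matrix m n 𝕜 ≃L[𝕜] (m → n → 𝕜) :=
    (Matrix.ofLinearEquiv 𝕜).symm.toContinuousLinearEquiv
  have he : HasDerivWithinAt F F' s t ↔ HasDerivWithinAt (fun u => e (F u)) (e F') s t :=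
    ⟨fun h => e.hasFDerivAt.comp_hasDerivWithinAt t h,
      fun h => e.symm.hasFDerivAt.comp_hasDerivWithinAt t h⟩
  simp_rw [he, hasDerivWithinAt_pi]
  rfl

theorem HasDerivWithinAt.matrix_mul {A : 𝕜 → Matrix l m 𝕜} {C : 𝕜 → Matrix m n 𝕜}
    {A' : Matrix l m 𝕜} {C' : Matrix m n 𝕜} (hA : HasDerivWithinAt A A' s t)
    (hC : HasDerivWithinAt C C' s t) :
    HasDerivWithinAt (fun u => A u * C u) (A' * C t + A t * C') s t := by
  rw [hasDerivWithinAt_matrix] at hA hC ⊢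
  intro i j
  simp only [Matrix.mul_apply, Matrix.add_apply, ← Finset.sum_add_distrib]
  exact HasDerivWithinAt.fun_sum fun k _ => (hA i k).mul (hC k j)

end MatrixCalculus

section Bseg

variable {m : ℕ → ℕ} {B : ∀ l : ℕ, Matrix (Fin (m (l + 1))) (Fin (m l)) ℝ}

theorem Bseg_self (a : ℕ) : Bseg B a a = 1 := by
  cases a <;> simp [Bseg]

theorem Bseg_succ {a b : ℕ} (h : a ≠ b + 1) : Bseg B a (b + 1) = B b * Bseg B a b := by
  simp [Bseg, h]

theorem Bseg_zero_succ (b : ℕ) : Bseg B 0 (b + 1) = B b * Bseg B 0 b :=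
  Bseg_succ (Nat.succ_ne_zero b).symm

theorem Bseg_update_of_le {l b : ℕ} (M : Matrix (Fin (m (l + 1))) (Fin (m l)) ℝ)
    (hb : b ≤ l) (a : ℕ) : Bseg (Function.update B l M) a b = Bseg B a b := by
  induction b with
  | zero => rfl
  | succ b ih =>
    by_cases ha : a = b + 1
    · subst ha; rw [Bseg_self, Bseg_self]
    · rw [Bseg_succ ha, Bseg_succ ha, Function.update_of_ne (by omega), ih (by omega)]

theorem Bseg_update_zero {l b : ℕ} (M : Matrix (Fin (m (l + 1))) (Fin (m l)) ℝ) (hl : l < b) :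
    Bseg (Function.update B l M) 0 b = Bseg B (l + 1) b * (M * Bseg B 0 l) := by
  induction b with
  | zero => omega
  | succ b ih =>
    rcases Nat.lt_succ_iff_lt_or_eq.mp hl with hl | rfl
    · rw [Bseg_zero_succ, ih hl, Function.update_of_ne (by omega),
        Bseg_succ (show l + 1 ≠ b + 1 by omega), Matrix.mul_assoc]
    · rw [Bseg_zero_succ, Function.update_self, Bseg_self, Matrix.one_mul,
        Bseg_update_of_le M le_rfl]

theorem hasDerivWithinAt_Bseg_zero {Bt : ℝ → ∀ l : ℕ, Matrix (Fin (m (l + 1))) (Fin (m l)) ℝ}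
    {B' : ∀ l : ℕ, Matrix (Fin (m (l + 1))) (Fin (m l)) ℝ} {s : Set ℝ} {t : ℝ} {b : ℕ}
    (hB : ∀ l < b, HasDerivWithinAt (fun u => Bt u l) (B' l) s t) :
    HasDerivWithinAt (fun u => Bseg (Bt u) 0 b)
      (∑ l ∈ Finset.range b, Bseg (Bt t) (l + 1) b * B' l * Bseg (Bt t) 0 l) s t := by
  induction b with
  | zero =>
    simp only [Finset.range_zero, Finset.sum_empty, Bseg_self]
    exact hasDerivWithinAt_const t s _
  | succ b ih =>
    simp only [Bseg_zero_succ]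
    refine ((hB b (by omega)).matrix_mul (ih fun l hl => hB l (by omega))).congr_deriv ?_
    simp only [Finset.sum_range_succ, Bseg_self, Matrix.one_mul, Matrix.mul_sum]
    refine (add_comm _ _).trans (congrArg (· + _) (Finset.sum_congr rfl fun l hl => ?_))
    rw [Bseg_succ (by simp at hl; omega), Matrix.mul_assoc, Matrix.mul_assoc, Matrix.mul_assoc]

end Bseg

section Gradient

theorem Matrix.vec_dotProduct_vec_mul_mul {R : Type*} [CommSemiring R] {l m n p : Type*}
    [Fintype l] [Fintype m] [Fintype n] [Fintype p] (V : Matrix l p R) (C : Matrix l m R)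
    (M : Matrix m n R) (E : Matrix n p R) :
    vec V ⬝ᵥ vec (C * M * E) = vec (Cᵀ * V * Eᵀ) ⬝ᵥ vec M := by
  simp only [vec_dotProduct_vec, transpose_mul, transpose_transpose, ← Matrix.mul_assoc]
  rw [Matrix.trace_mul_comm]
  simp only [Matrix.mul_assoc]

variable {a b c d : ℕ}

theorem fderiv_apply_eq_dotProduct_entryDeriv {ℓ : Matrix (Fin a) (Fin b) ℝ → ℝ}
    {M : Matrix (Fin a) (Fin b) ℝ} (hℓ : DifferentiableAt ℝ ℓ M) (D : Matrix (Fin a) (Fin b) ℝ) :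
    fderiv ℝ ℓ M D = vec (entryDeriv ℓ M) ⬝ᵥ vec D := by
  have hsingle : ∀ i j, fderiv ℝ ℓ M (Matrix.single i j 1) = entryDeriv ℓ M i j :=
    fun i j => (hℓ.lineDeriv_eq_fderiv).symm
  conv_lhs => rw [D.matrix_eq_sum_single]
  simp only [map_sum, dotProduct, Fintype.sum_prod_type, vec]
  rw [Finset.sum_comm]
  refine Finset.sum_congr rfl fun j _ => Finset.sum_congr rfl fun i _ => ?_
  rw [show Matrix.single i j (D i j) = D i j • Matrix.single i j 1 by
      rw [Matrix.smul_single, smul_eq_mul, mul_one],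
    map_smul, hsingle, smul_eq_mul, mul_comm]

theorem deriv_comp_add_smul_eq_dotProduct_entryDeriv {ℓ : Matrix (Fin a) (Fin b) ℝ → ℝ}
    {M : Matrix (Fin a) (Fin b) ℝ} (hℓ : DifferentiableAt ℝ ℓ M) (D : Matrix (Fin a) (Fin b) ℝ) :
    deriv (fun s : ℝ => ℓ (M + s • D)) 0 = vec (entryDeriv ℓ M) ⬝ᵥ vec D := by
  rw [← fderiv_apply_eq_dotProduct_entryDeriv hℓ]
  exact hℓ.lineDeriv_eq_fderiv

theorem entryDeriv_comp_of_affine {ℓ : Matrix (Fin c) (Fin d) ℝ → ℝ}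
    {G : Matrix (Fin a) (Fin b) ℝ → Matrix (Fin c) (Fin d) ℝ} {M : Matrix (Fin a) (Fin b) ℝ}
    (hℓ : DifferentiableAt ℝ ℓ (G M)) (C : Matrix (Fin c) (Fin a) ℝ)
    (E : Matrix (Fin b) (Fin d) ℝ) (hG : ∀ D, G (M + D) = G M + C * D * E) :
    entryDeriv (fun M' => ℓ (G M')) M = Cᵀ * entryDeriv ℓ (G M) * Eᵀ := by
  ext i j
  rw [entryDeriv, Matrix.of_apply]
  simp only [hG, Matrix.mul_smul, Matrix.smul_mul]
  rw [deriv_comp_add_smul_eq_dotProduct_entryDeriv hℓ, Matrix.vec_dotProduct_vec_mul_mul,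
    vec_single, dotProduct_single, mul_one]
  rfl

end Gradient

section Norms

variable {p q r w : Type*} [Fintype p] [Fintype q] [Fintype r]

theorem vecNormSq_eq_dotProduct_self (v : p → ℝ) : vecNormSq v = v ⬝ᵥ v := by
  simp only [vecNormSq, dotProduct, sq]

theorem Matrix.vec_dotProduct_vec_mul_neg_mul [Fintype w] (V : Matrix p q ℝ) (C : Matrix p r ℝ)
    (E : Matrix w q ℝ) :
    vec V ⬝ᵥ vec (C * -(Cᵀ * V * Eᵀ) * E) = -vecNormSq (vec (Cᵀ * V * Eᵀ)) := by
  rw [vec_dotProduct_vec_mul_mul, vec_neg, dotProduct_neg, vecNormSq_eq_dotProduct_self]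

theorem Matrix.vec_dotProduct_vec_neg_mul [Fintype w] [DecidableEq p] (V : Matrix p q ℝ)
    (E : Matrix w q ℝ) : vec V ⬝ᵥ vec (-(V * Eᵀ) * E) = -vecNormSq (vec (V * Eᵀ)) := by
  simpa using vec_dotProduct_vec_mul_neg_mul V (1 : Matrix p p ℝ) E

theorem quadForm_kronecker_one [DecidableEq p] (P : Matrix r q ℝ) (A : Matrix p q ℝ) :
    quadForm ((Pᵀ * P) ⊗ₖ (1 : Matrix p p ℝ)) (vecM A) = vecNormSq (vec (A * Pᵀ)) := by
  have h := vec_dotProduct_vec_mul_mul A 1 (A * Pᵀ) P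
  rw [transpose_one, Matrix.one_mul, Matrix.one_mul, Matrix.mul_assoc] at h
  rw [quadForm, show vecM A = vec A from rfl, kronecker_mulVec_vec, transpose_mul,
    transpose_transpose, Matrix.one_mul, h, vecNormSq_eq_dotProduct_self]

end Norms

section LinearGNN

variable {n nb my H : ℕ} {m : ℕ → ℕ} (X : Matrix (Fin (m 0)) (Fin n) ℝ)
  (S : Matrix (Fin n) (Fin n) ℝ) (ι : Fin nb → Fin n) {ℓ : Matrix (Fin my) (Fin nb) ℝ → ℝ}

theorem gnnOut_eq_mul (W : Matrix (Fin my) (Fin (m H)) ℝ)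
    (B : ∀ l : ℕ, Matrix (Fin (m (l + 1))) (Fin (m l)) ℝ) :
    gnnOut H X S ι W B = W * Bseg B 0 H * (X * (S ^ H).submatrix id ι) :=
  Matrix.mul_assoc _ _ _

theorem entryDeriv_comp_gnnOut_readout (W : Matrix (Fin my) (Fin (m H)) ℝ)
    (B : ∀ l : ℕ, Matrix (Fin (m (l + 1))) (Fin (m l)) ℝ)
    (hℓ : DifferentiableAt ℝ ℓ (gnnOut H X S ι W B)) :
    entryDeriv (fun W' => ℓ (gnnOut H X S ι W' B)) W
      = entryDeriv ℓ (gnnOut H X S ι W B) * (Bseg B 0 H * (X * (S ^ H).submatrix id ι))ᵀ := by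
  rw [entryDeriv_comp_of_affine (G := fun W' => gnnOut H X S ι W' B) hℓ 1
      (Bseg B 0 H * (X * (S ^ H).submatrix id ι)) fun D => by
        simp only [gnnOut_eq_mul, Matrix.add_mul, Matrix.one_mul, Matrix.mul_assoc],
    transpose_one, Matrix.one_mul]

theorem entryDeriv_comp_gnnOut_layer (W : Matrix (Fin my) (Fin (m H)) ℝ)
    (B : ∀ l : ℕ, Matrix (Fin (m (l + 1))) (Fin (m l)) ℝ) {l : ℕ} (hl : l < H)
    (hℓ : DifferentiableAt ℝ ℓ (gnnOut H X S ι W B)) :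
    entryDeriv (fun M => ℓ (gnnOut H X S ι W (Function.update B l M))) (B l)
      = (W * Bseg B (l + 1) H)ᵀ * entryDeriv ℓ (gnnOut H X S ι W B)
          * (Bseg B 0 l * (X * (S ^ H).submatrix id ι))ᵀ := by
  have hupdate : ∀ M, gnnOut H X S ι W (Function.update B l M)
      = W * Bseg B (l + 1) H * M * (Bseg B 0 l * (X * (S ^ H).submatrix id ι)) := fun M => by
    simp only [gnnOut_eq_mul, Bseg_update_zero M hl, Matrix.mul_assoc]
  rw [← Function.update_eq_self l B] at hℓ
  convert entryDeriv_comp_of_affine (G := fun M => gnnOut H X S ι W (Function.update B l M))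
    hℓ (W * Bseg B (l + 1) H) (Bseg B 0 l * (X * (S ^ H).submatrix id ι)) fun D => by
      simp only [hupdate, Matrix.mul_add, Matrix.add_mul]
  rw [Function.update_eq_self]

theorem hasDerivWithinAt_gnnOut {Wt : ℝ → Matrix (Fin my) (Fin (m H)) ℝ}
    {Bt : ℝ → ∀ l : ℕ, Matrix (Fin (m (l + 1))) (Fin (m l)) ℝ}
    {W' : Matrix (Fin my) (Fin (m H)) ℝ} {B' : ∀ l : ℕ, Matrix (Fin (m (l + 1))) (Fin (m l)) ℝ}
    {s : Set ℝ} {t : ℝ} (hW : HasDerivWithinAt Wt W' s t)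
    (hB : ∀ l < H, HasDerivWithinAt (fun u => Bt u l) (B' l) s t) :
    HasDerivWithinAt (fun u => gnnOut H X S ι (Wt u) (Bt u))
      (W' * (Bseg (Bt t) 0 H * (X * (S ^ H).submatrix id ι))
        + ∑ l ∈ Finset.range H, (Wt t * Bseg (Bt t) (l + 1) H) * B' l
            * (Bseg (Bt t) 0 l * (X * (S ^ H).submatrix id ι))) s t := by
  simp only [gnnOut_eq_mul]
  refine ((hW.matrix_mul (hasDerivWithinAt_Bseg_zero hB)).matrix_mul
    (hasDerivWithinAt_const t s (X * (S ^ H).submatrix id ι))).congr_deriv ?_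
  simp only [Matrix.mul_zero, add_zero, Matrix.add_mul, Matrix.mul_sum, Matrix.sum_mul,
    Matrix.mul_assoc]

end LinearGNN

/-- The paper's sum over `i ∈ {1,…,H}` runs here over `i ∈ range H`, paper-`i` being `i + 1`. -/
theorem stmt7_general {n nb my H : ℕ} {m : ℕ → ℕ}
    (X : Matrix (Fin (m 0)) (Fin n) ℝ) (S : Matrix (Fin n) (Fin n) ℝ)
    (ι : Fin nb → Fin n)
    (ℓ : Matrix (Fin my) (Fin nb) ℝ → ℝ) (hℓ : Differentiable ℝ ℓ)
    (Wt : ℝ → Matrix (Fin my) (Fin (m H)) ℝ)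
    (Bt : ℝ → ∀ l : ℕ, Matrix (Fin (m (l + 1))) (Fin (m l)) ℝ)
    (hW : ∀ t ∈ Set.Ici (0 : ℝ), ∀ i j,
      HasDerivWithinAt (fun s => Wt s i j)
        (-(entryDeriv (fun W' => ℓ (gnnOut H X S ι W' (Bt t))) (Wt t)) i j) (Set.Ici 0) t)
    (hB : ∀ t ∈ Set.Ici (0 : ℝ), ∀ l < H, ∀ i j,
      HasDerivWithinAt (fun s => Bt s l i j)
        (-(entryDeriv
            (fun M : Matrix (Fin (m (l + 1))) (Fin (m l)) ℝ =>
              ℓ (gnnOut H X S ι (Wt t) (Function.update (Bt t) l M))) (Bt t l)) i j)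
        (Set.Ici 0) t) :
    ∀ t ∈ Set.Ici (0 : ℝ),
      ∀ V : Matrix (Fin my) (Fin nb) ℝ,
      V = entryDeriv ℓ (gnnOut H X S ι (Wt t) (Bt t)) →
      HasDerivWithinAt (fun s => ℓ (gnnOut H X S ι (Wt s) (Bt s)))
        (-(quadForm (((Bseg (Bt t) 0 H)ᵀ * Bseg (Bt t) 0 H) ⊗ₖ
              (1 : Matrix (Fin my) (Fin my) ℝ))
            (vecM (V * (X * (S ^ H).submatrix id ι)ᵀ))
          + ∑ i ∈ Finset.range H,
            vecNormSq ((Bseg (Bt t) 0 i ⊗ₖ (Wt t * Bseg (Bt t) (i + 1) H)ᵀ).mulVec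
              (vecM (V * (X * (S ^ H).submatrix id ι)ᵀ)))))
        (Set.Ici 0) t := by
  intro t ht V hV
  have hW' : HasDerivWithinAt Wt
      (-(V * (Bseg (Bt t) 0 H * (X * (S ^ H).submatrix id ι))ᵀ)) (Set.Ici 0) t := by
    have h := hW t ht
    rw [entryDeriv_comp_gnnOut_readout X S ι _ _ (hℓ _), ← hV] at h
    exact hasDerivWithinAt_matrix.2 h
  have hB' : ∀ l < H, HasDerivWithinAt (fun u => Bt u l)
      (-((Wt t * Bseg (Bt t) (l + 1) H)ᵀ * V
        * (Bseg (Bt t) 0 l * (X * (S ^ H).submatrix id ι))ᵀ)) (Set.Ici 0) t := by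
    intro l hl
    have h := hB t ht l hl
    rw [entryDeriv_comp_gnnOut_layer X S ι _ _ hl (hℓ _), ← hV] at h
    exact hasDerivWithinAt_matrix.2 h
  refine ((hℓ _).hasFDerivAt.comp_hasDerivWithinAt t
    (hasDerivWithinAt_gnnOut X S ι hW' hB')).congr_deriv ?_
  refine (fderiv_apply_eq_dotProduct_entryDeriv (hℓ _) _).trans ?_
  rw [← hV, vec_add, dotProduct_add, vec_dotProduct_vec_neg_mul, vec_sum, dotProduct_sum,
    Finset.sum_congr rfl fun l _ => vec_dotProduct_vec_mul_neg_mul _ _ _,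
    quadForm_kronecker_one, Finset.sum_neg_distrib, neg_add]
  simp only [show ∀ A : Matrix (Fin my) (Fin (m 0)) ℝ, vecM A = vec A from fun _ => rfl,
    kronecker_mulVec_vec, transpose_mul, Matrix.mul_assoc]

/-- Theorem 3(i) of the paper: exact loss-reduction formula for the
non-multiscale linear GNN under any differentiable loss `ℓ`:
`d/dt L = −‖vec[V_t (X(S^H)_{*I})ᵀ]‖²_{F_{(H),t}} − Σ_{i=1}^H ‖J_{(i,H),t} vec[V_t (X(S^H)_{*I})ᵀ]‖₂²`
(the sum over the paper's `i ∈ {1,…,H}` is written below over `i ∈ range H`,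
with paper-`i` equal to `i+1`). -/
theorem stmt7 {n nb my H : ℕ} {m : ℕ → ℕ}
    (X : Matrix (Fin (m 0)) (Fin n) ℝ) (S : Matrix (Fin n) (Fin n) ℝ)
    (ι : Fin nb → Fin n) (hι : Function.Injective ι)
    (ℓ : Matrix (Fin my) (Fin nb) ℝ → ℝ) (hℓ : Differentiable ℝ ℓ)
    (Wt : ℝ → Matrix (Fin my) (Fin (m H)) ℝ)
    (Bt : ℝ → ∀ l : ℕ, Matrix (Fin (m (l + 1))) (Fin (m l)) ℝ)
    (hW : ∀ t ∈ Set.Ici (0 : ℝ), ∀ i j,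
      HasDerivWithinAt (fun s => Wt s i j)
        (-(entryDeriv (fun W' => ℓ (gnnOut H X S ι W' (Bt t))) (Wt t)) i j) (Set.Ici 0) t)
    (hB : ∀ t ∈ Set.Ici (0 : ℝ), ∀ l < H, ∀ i j,
      HasDerivWithinAt (fun s => Bt s l i j)
        (-(entryDeriv
            (fun M : Matrix (Fin (m (l + 1))) (Fin (m l)) ℝ =>
              ℓ (gnnOut H X S ι (Wt t) (Function.update (Bt t) l M))) (Bt t l)) i j)
        (Set.Ici 0) t) :
    ∀ t ∈ Set.Ici (0 : ℝ),
      ∀ V : Matrix (Fin my) (Fin nb) ℝ,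
      V = entryDeriv ℓ (gnnOut H X S ι (Wt t) (Bt t)) →
      HasDerivWithinAt (fun s => ℓ (gnnOut H X S ι (Wt s) (Bt s)))
        (-(quadForm (((Bseg (Bt t) 0 H)ᵀ * Bseg (Bt t) 0 H) ⊗ₖ
              (1 : Matrix (Fin my) (Fin my) ℝ))
            (vecM (V * (X * (S ^ H).submatrix id ι)ᵀ))
          + ∑ i ∈ Finset.range H,
            vecNormSq ((Bseg (Bt t) 0 i ⊗ₖ (Wt t * Bseg (Bt t) (i + 1) H)ᵀ).mulVec
              (vecM (V * (X * (S ^ H).submatrix id ι)ᵀ)))))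
        (Set.Ici 0) t :=
  stmt7_general X S ι ℓ hℓ Wt Bt hW hB

end
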